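/- For every k ≥ 1 and n ≥ 1, Σ_λ P_k(λ)/z_λ (sum over binary partitions λ of n) equals r^k(0, n, 0)/(2n−1)^k, where r^k is the recursively defined function given in the context. (Equivalently, the number of tangled chains of length k and size n is r^k(0,n,0)/f^k(n) with f^k(s) = (2s−1)^k.) -/

import Mathlib

/-- `z_λ = ∏_i i^{m_i} · m_i!` for a partition with `m_i` parts equal to `i`,
presented as a multiset of parts. -/
def partZ (M : Multiset ℕ) : ℕ :=
  M.prod * (M.dedup.map fun i => (M.count i).factorial).prod

/-- `P_k(λ) = ∏_{i=2}^{ℓ} (2(λ_i + ⋯ + λ_ℓ) - 1)^k` for a partition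
`λ_1 ≥ λ_2 ≥ ⋯ ≥ λ_ℓ`, presented as a multiset of parts: the tail sums of the
decreasing arrangement are the prefix sums of the increasing arrangement. -/
def partP (k : ℕ) (M : Multiset ℕ) : ℕ :=
  ∏ j ∈ Finset.range ((M.sort (· ≤ ·)).length - 1),
    (2 * ((M.sort (· ≤ ·)).take (j + 1)).sum - 1) ^ k

/-- `Σ_λ P_k(λ)/z_λ`, the sum over binary partitions `λ` of `n`; by Theorem 1 of the
paper this is the number of tangled chains of length `k` (for `k = 2`, tanglegrams). -/
noncomputable def binPartSum (k n : ℕ) : ℚ :=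
  ∑ᶠ (mu : n.Partition) (_ : ∀ p ∈ mu.parts, ∃ i : ℕ, p = 2 ^ i),
    (partP k mu.parts : ℚ) / (partZ mu.parts : ℚ)

/-- `c^k(h, m, s) = ∏_{j=1}^{m} f^k(s + j·2^h)/(j·2^h)` where `f^k(s) = (2s-1)^k`;
in particular `c^k(h, 0, s) = 1`. -/
def cfun (k h m s : ℕ) : ℚ :=
  ∏ j ∈ Finset.Icc 1 m,
    (2 * ((s : ℚ) + (j : ℚ) * (2 : ℚ) ^ h) - 1) ^ k / ((j : ℚ) * (2 : ℚ) ^ h)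

/-- `r^k(h, n, s) = Σ_{m = 0, n - m even}^{n} c^k(h, m, s) · r^k(h+1, (n-m)/2, s + m·2^h)`
with base case `r^k(h, 0, s) = 1`. -/
def rfun (k : ℕ) (h n s : ℕ) : ℚ :=
  if _hn : n = 0 then 1
  else
    ∑ m ∈ (Finset.range (n + 1)).filter fun m => (n - m) % 2 = 0,
      cfun k h m s * rfun k (h + 1) ((n - m) / 2) (s + m * 2 ^ h)
termination_by n

/-!
Unfolding the recursion for `r^k(0, n, 0)` turns it into a sum over binary partitions: at level `h`
the summation index `m` is the number of parts equal to `2^h`, and `s` is the total size of the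
smaller parts. The factor `c^k(h, m, s)` is then the product of `f^k` over the partial sums of the
increasing arrangement of the partition that end in this block, divided by the share
`(2^h)^m m!` of `z_λ`. So each binary partition `λ` contributes `f^k` of all its partial sums over
`z_λ`; the last partial sum is `n`, and the others give exactly `P_k(λ)`.
-/

section PrefixSumProd

variable {β : Type*} [CommMonoid β]

def prefixSumProd (f : ℕ → β) (s : ℕ) (L : List ℕ) : β :=
  ∏ j ∈ Finset.range L.length, f (s + (L.take (j + 1)).sum)

theorem prefixSumProd_append (f : ℕ → β) (s : ℕ) (L₁ L₂ : List ℕ) :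
    prefixSumProd f s (L₁ ++ L₂) =
      prefixSumProd f s L₁ * prefixSumProd f (s + L₁.sum) L₂ := by
  unfold prefixSumProd
  rw [List.length_append, Finset.prod_range_add]
  congr 1
  · refine Finset.prod_congr rfl fun j hj => ?_
    rw [List.take_append, Nat.sub_eq_zero_of_le (Finset.mem_range.1 hj), List.take_zero,
      List.append_nil]
  · refine Finset.prod_congr rfl fun j _ => ?_
    rw [List.take_append, List.take_of_length_le (by omega), List.sum_append,
      show L₁.length + j + 1 - L₁.length = j + 1 by omega, add_assoc]

theorem prefixSumProd_replicate (f : ℕ → β) (s m c : ℕ) :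
    prefixSumProd f s (List.replicate m c) = ∏ j ∈ Finset.range m, f (s + (j + 1) * c) := by
  unfold prefixSumProd
  rw [List.length_replicate]
  refine Finset.prod_congr rfl fun j hj => ?_
  rw [List.take_replicate, min_eq_left (Finset.mem_range.1 hj), List.sum_replicate, smul_eq_mul]

theorem prefixSumProd_eq_mul_of_ne_nil (f : ℕ → β) (s : ℕ) {L : List ℕ} (hL : L ≠ []) :
    prefixSumProd f s L =
      (∏ j ∈ Finset.range (L.length - 1), f (s + (L.take (j + 1)).sum)) * f (s + L.sum) := by
  have hlen : L.length = L.length - 1 + 1 :=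
    (Nat.succ_pred_eq_of_pos (List.length_pos_iff.2 hL)).symm
  rw [prefixSumProd, hlen, Finset.prod_range_succ, ← hlen, List.take_length]

end PrefixSumProd

section PartZ

theorem partZ_zero : partZ 0 = 1 := by simp [partZ]

theorem partZ_cons (a : ℕ) (M : Multiset ℕ) :
    partZ (a ::ₘ M) = a * (M.count a + 1) * partZ M := by
  classical
  set T := (a ::ₘ M).toFinset
  have haT : a ∈ T := Multiset.mem_toFinset.2 (Multiset.mem_cons_self a M)
  have hM : ∏ i ∈ M.toFinset, (M.count i).factorial = ∏ i ∈ T, (M.count i).factorial :=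
    Finset.prod_subset (fun i hi => by simp_all [T]) fun i _ hi => by
      rw [Multiset.count_eq_zero_of_notMem (by simpa using hi), Nat.factorial_zero]
  have hcons : ∏ i ∈ T.erase a, ((a ::ₘ M).count i).factorial =
      ∏ i ∈ T.erase a, (M.count i).factorial :=
    Finset.prod_congr rfl fun i hi => by rw [Multiset.count_cons_of_ne (Finset.ne_of_mem_erase hi)]
  change _ * ∏ i ∈ T, _ = _ * (_ * ∏ i ∈ M.toFinset, _)
  rw [hM, Multiset.prod_cons, ← Finset.mul_prod_erase T _ haT, ← Finset.mul_prod_erase T _ haT,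
    hcons, Multiset.count_cons_self, Nat.factorial_succ]
  ring

theorem partZ_replicate_one_add (m : ℕ) {M : Multiset ℕ} (h1 : 1 ∉ M) :
    partZ (Multiset.replicate m 1 + M) = m.factorial * partZ M := by
  induction m with
  | zero => simp
  | succ m ih =>
    rw [Multiset.replicate_succ, Multiset.cons_add, partZ_cons, ih, Multiset.count_add,
      Multiset.count_replicate_self, Multiset.count_eq_zero_of_notMem h1, Nat.factorial_succ]
    ring

theorem partZ_map_two_mul (M : Multiset ℕ) :
    partZ (M.map (2 * ·)) = 2 ^ Multiset.card M * partZ M := by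
  induction M using Multiset.induction with
  | empty => simp [partZ_zero]
  | cons a M ih =>
    rw [Multiset.map_cons, partZ_cons, partZ_cons, ih,
      Multiset.count_map_eq_count' _ _ (fun x y h => by omega) a, Multiset.card_cons, pow_succ]
    ring

end PartZ

section BinaryPartitions

open Classical in
noncomputable def binaryPartitions (n : ℕ) : Finset (Multiset ℕ) :=
  (Finset.univ.filter fun mu : n.Partition => ∀ p ∈ mu.parts, ∃ i : ℕ, p = 2 ^ i).image
    Nat.Partition.parts

theorem mem_binaryPartitions {n : ℕ} {M : Multiset ℕ} :
    M ∈ binaryPartitions n ↔ M.sum = n ∧ ∀ p ∈ M, ∃ i : ℕ, p = 2 ^ i := by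
  simp only [binaryPartitions, Finset.mem_image, Finset.mem_filter, Finset.mem_univ, true_and]
  constructor
  · rintro ⟨mu, hpow, rfl⟩
    exact ⟨mu.parts_sum, hpow⟩
  · rintro ⟨hsum, hpow⟩
    refine ⟨⟨M, fun hp => ?_, hsum⟩, hpow, rfl⟩
    obtain ⟨i, rfl⟩ := hpow _ hp
    positivity

theorem pos_of_mem_binaryPartitions {n : ℕ} {M : Multiset ℕ} (hM : M ∈ binaryPartitions n)
    {p : ℕ} (hp : p ∈ M) : 0 < p := by
  obtain ⟨i, rfl⟩ := (mem_binaryPartitions.1 hM).2 p hp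
  positivity

theorem binaryPartitions_zero : binaryPartitions 0 = {0} := by
  ext M
  rw [mem_binaryPartitions, Finset.mem_singleton, Multiset.sum_eq_zero_iff]
  constructor
  · rintro ⟨hzero, hpow⟩
    refine Multiset.eq_zero_of_forall_notMem fun p hp => ?_
    obtain ⟨i, rfl⟩ := hpow _ hp
    exact pow_ne_zero i two_ne_zero (hzero _ hp)
  · rintro rfl
    simp

theorem binPartSum_eq_sum (k n : ℕ) :
    binPartSum k n = ∑ M ∈ binaryPartitions n, (partP k M : ℚ) / partZ M := by
  classical
  rw [binPartSum, finsum_eq_sum_of_fintype]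
  simp only [finsum_eq_if]
  rw [← Finset.sum_filter, binaryPartitions,
    Finset.sum_image fun mu _ mu' _ h => Nat.Partition.ext h]

def doubleParts (m : ℕ) (M : Multiset ℕ) : Multiset ℕ :=
  Multiset.replicate m 1 + M.map (2 * ·)

def halveParts (M : Multiset ℕ) : Multiset ℕ :=
  (M.filter (· ≠ 1)).map (· / 2)

theorem one_notMem_map_two_mul (M : Multiset ℕ) : 1 ∉ M.map (2 * ·) := by
  simp only [Multiset.mem_map, not_exists, not_and]
  omega

theorem sum_doubleParts (m : ℕ) (M : Multiset ℕ) : (doubleParts m M).sum = m + 2 * M.sum := by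
  rw [doubleParts, Multiset.sum_add, Multiset.sum_replicate, smul_eq_mul, mul_one,
    Multiset.sum_map_mul_left, Multiset.map_id']

theorem count_one_doubleParts (m : ℕ) (M : Multiset ℕ) : (doubleParts m M).count 1 = m := by
  rw [doubleParts, Multiset.count_add, Multiset.count_replicate_self,
    Multiset.count_eq_zero_of_notMem (one_notMem_map_two_mul M), add_zero]

theorem halveParts_doubleParts (m : ℕ) (M : Multiset ℕ) : halveParts (doubleParts m M) = M := by
  rw [halveParts, doubleParts, Multiset.filter_add, Multiset.filter_eq_nil.2 fun a ha => by
      simp [Multiset.eq_of_mem_replicate ha],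
    Multiset.filter_eq_self.2 fun a ha => ne_of_mem_of_not_mem ha (one_notMem_map_two_mul M),
    zero_add, Multiset.map_map]
  exact (Multiset.map_congr rfl fun x _ => by simp).trans M.map_id

theorem doubleParts_halveParts {M : Multiset ℕ} (hM : ∀ p ∈ M, ∃ i : ℕ, p = 2 ^ i) :
    doubleParts (M.count 1) (halveParts M) = M := by
  have heven : ∀ p ∈ M.filter (· ≠ 1), 2 * (p / 2) = p := by
    intro p hp
    obtain ⟨hpM, hp1⟩ := Multiset.mem_filter.1 hp
    obtain ⟨_ | i, rfl⟩ := hM p hpM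
    · exact absurd rfl hp1
    · rw [pow_succ']
      omega
  rw [doubleParts, halveParts, Multiset.map_map, Function.comp_def,
    Multiset.map_congr rfl heven, Multiset.map_id', ← Multiset.filter_eq' M 1]
  exact Multiset.filter_add_not _ M

theorem doubleParts_mem_binaryPartitions {n : ℕ} {M : Multiset ℕ}
    (hM : M ∈ binaryPartitions n) (m : ℕ) :
    doubleParts m M ∈ binaryPartitions (m + 2 * n) := by
  obtain ⟨hsum, hpow⟩ := mem_binaryPartitions.1 hM
  refine mem_binaryPartitions.2 ⟨by rw [sum_doubleParts, hsum], fun p hp => ?_⟩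
  rcases Multiset.mem_add.1 hp with h | h
  · exact ⟨0, Multiset.eq_of_mem_replicate h⟩
  · obtain ⟨x, hx, rfl⟩ := Multiset.mem_map.1 h
    obtain ⟨i, rfl⟩ := hpow x hx
    exact ⟨i + 1, (pow_succ' 2 i).symm⟩

theorem halveParts_mem_binaryPartitions {n : ℕ} {M : Multiset ℕ}
    (hM : M ∈ binaryPartitions n) :
    M.count 1 + 2 * (halveParts M).sum = n ∧
      halveParts M ∈ binaryPartitions (halveParts M).sum := by
  obtain ⟨hsum, hpow⟩ := mem_binaryPartitions.1 hM
  refine ⟨by rw [← sum_doubleParts, doubleParts_halveParts hpow, hsum],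
    mem_binaryPartitions.2 ⟨rfl, fun p hp => ?_⟩⟩
  obtain ⟨q, hq, rfl⟩ := Multiset.mem_map.1 hp
  obtain ⟨hqM, hq1⟩ := Multiset.mem_filter.1 hq
  obtain ⟨_ | i, rfl⟩ := hpow q hqM
  · exact absurd rfl hq1
  · exact ⟨i, by rw [pow_succ']; omega⟩

theorem sum_binaryPartitions_eq_sum_doubleParts {β : Type*} [AddCommMonoid β] (n : ℕ)
    (g : Multiset ℕ → β) :
    ∑ M ∈ binaryPartitions n, g M =
      ∑ m ∈ (Finset.range (n + 1)).filter (fun m => (n - m) % 2 = 0),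
        ∑ M ∈ binaryPartitions ((n - m) / 2), g (doubleParts m M) := by
  rw [Finset.sum_sigma']
  refine Finset.sum_bij' (fun M _ => ⟨M.count 1, halveParts M⟩)
    (fun p _ => doubleParts p.1 p.2) (fun M hM => ?_) (fun p hp => ?_) (fun M hM => ?_)
    (fun p hp => ?_) (fun M hM => ?_)
  · obtain ⟨hsum, hhalf⟩ := halveParts_mem_binaryPartitions hM
    simp only [Finset.mem_sigma, Finset.mem_filter, Finset.mem_range]
    refine ⟨⟨by omega, by omega⟩, ?_⟩
    rwa [show (n - M.count 1) / 2 = (halveParts M).sum by omega]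
  · simp only [Finset.mem_sigma, Finset.mem_filter, Finset.mem_range] at hp
    obtain ⟨⟨hm, heven⟩, hM⟩ := hp
    convert doubleParts_mem_binaryPartitions hM p.1 using 2
    omega
  · exact doubleParts_halveParts (mem_binaryPartitions.1 hM).2
  · rw [count_one_doubleParts, halveParts_doubleParts]
  · rw [doubleParts_halveParts (mem_binaryPartitions.1 hM).2]

theorem sort_doubleParts (m : ℕ) {M : Multiset ℕ} (hM : ∀ p ∈ M, 0 < p) :
    (doubleParts m M).sort (· ≤ ·) =
      List.replicate m 1 ++ (M.sort (· ≤ ·)).map (2 * ·) := by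
  refine List.Perm.eq_of_pairwise' (Multiset.pairwise_sort _ _) ?_ ?_
  · rw [List.pairwise_append]
    refine ⟨List.pairwise_replicate.2 (Or.inr le_rfl),
      (Multiset.pairwise_sort _ _).map _ fun a b h => by omega, fun x hx y hy => ?_⟩
    obtain ⟨b, hb, rfl⟩ := List.mem_map.1 hy
    have := hM b ((Multiset.mem_sort _).1 hb)
    rw [List.eq_of_mem_replicate hx]
    omega
  · rw [← Multiset.coe_eq_coe, Multiset.sort_eq, ← Multiset.coe_add, ← Multiset.map_coe,
      Multiset.sort_eq, Multiset.coe_replicate, doubleParts]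

end BinaryPartitions

def oddPow (k s : ℕ) : ℚ := (2 * (s : ℚ) - 1) ^ k

theorem cfun_eq_prefixSumProd (k h m s : ℕ) :
    cfun k h m s =
      prefixSumProd (oddPow k) s (List.replicate m (2 ^ h)) /
        (((2 : ℚ) ^ h) ^ m * m.factorial) := by
  rw [prefixSumProd_replicate]
  induction m with
  | zero => simp [cfun]
  | succ m ih =>
    rw [cfun, Finset.prod_Icc_succ_top (by omega), ← cfun, ih, Finset.prod_range_succ,
      div_mul_div_comm, pow_succ, Nat.factorial_succ, oddPow]
    push_cast
    ring

theorem partZ_doubleParts (m : ℕ) (M : Multiset ℕ) :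
    partZ (doubleParts m M) = m.factorial * (2 ^ Multiset.card M * partZ M) := by
  rw [doubleParts, partZ_replicate_one_add m (one_notMem_map_two_mul M), partZ_map_two_mul]

/-- The contribution of a binary partition `M` to `r^k(h, ·, s)`: the parts of `M` stand for parts
`2^h` times as large, and `s` is the size already accumulated at the levels below `h`. -/
def levelWeight (k h s : ℕ) (M : Multiset ℕ) : ℚ :=
  prefixSumProd (oddPow k) s ((M.sort (· ≤ ·)).map (2 ^ h * ·)) /
    (((2 : ℚ) ^ h) ^ Multiset.card M * partZ M)

theorem levelWeight_zero_left (k h s : ℕ) : levelWeight k h s 0 = 1 := by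
  simp [levelWeight, prefixSumProd, partZ_zero]

theorem levelWeight_doubleParts (k h s m : ℕ) {M : Multiset ℕ} (hM : ∀ p ∈ M, 0 < p) :
    levelWeight k h s (doubleParts m M) =
      cfun k h m s * levelWeight k (h + 1) (s + m * 2 ^ h) M := by
  have hscale : (2 ^ h * ·) ∘ (2 * ·) = (2 ^ (h + 1) * ·) := by
    funext x
    simp only [Function.comp_apply, pow_succ, mul_assoc]
  rw [levelWeight, levelWeight, cfun_eq_prefixSumProd, sort_doubleParts m hM, List.map_append,
    List.map_replicate, List.map_map, hscale, prefixSumProd_append, List.sum_replicate,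
    smul_eq_mul, mul_one, div_mul_div_comm, partZ_doubleParts]
  congr 1
  rw [doubleParts, Multiset.card_add, Multiset.card_replicate, Multiset.card_map]
  push_cast
  ring

theorem rfun_eq_sum_levelWeight (k n h s : ℕ) :
    rfun k h n s = ∑ M ∈ binaryPartitions n, levelWeight k h s M := by
  induction n using Nat.strong_induction_on generalizing h s with
  | _ n ih =>
  rcases Nat.eq_zero_or_pos n with rfl | hn
  · rw [rfun, dif_pos rfl, binaryPartitions_zero, Finset.sum_singleton, levelWeight_zero_left]
  · rw [rfun, dif_neg hn.ne', sum_binaryPartitions_eq_sum_doubleParts]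
    refine Finset.sum_congr rfl fun m hm => ?_
    rw [ih _ (by omega), Finset.mul_sum]
    refine Finset.sum_congr rfl fun M hM => ?_
    rw [levelWeight_doubleParts k h s m fun p => pos_of_mem_binaryPartitions hM]

theorem levelWeight_zero_zero (k : ℕ) {n : ℕ} (hn : 1 ≤ n) {M : Multiset ℕ}
    (hM : M ∈ binaryPartitions n) :
    levelWeight k 0 0 M = (partP k M : ℚ) / partZ M * oddPow k n := by
  set L := M.sort (· ≤ ·)
  have hLsum : L.sum = n := by
    rw [← (mem_binaryPartitions.1 hM).1, ← Multiset.sum_coe, Multiset.sort_eq]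
  have hL : L ≠ [] := by
    rintro h
    rw [h, List.sum_nil] at hLsum
    omega
  have hpartP : (partP k M : ℚ) =
      ∏ j ∈ Finset.range (L.length - 1), oddPow k (L.take (j + 1)).sum := by
    rw [partP, Nat.cast_prod]
    refine Finset.prod_congr rfl fun j hj => ?_
    have : 0 < (L.take (j + 1)).sum :=
      List.sum_pos _ (fun x hx => pos_of_mem_binaryPartitions hM
        ((Multiset.mem_sort _).1 (List.mem_of_mem_take hx))) (by simp [List.take_eq_nil_iff, hL])
    rw [oddPow, Nat.cast_pow, Nat.cast_sub (by omega : 1 ≤ 2 * (L.take (j + 1)).sum),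
      Nat.cast_mul, Nat.cast_one, Nat.cast_ofNat]
  simp only [levelWeight, pow_zero, one_mul, List.map_id', one_pow]
  rw [prefixSumProd_eq_mul_of_ne_nil _ _ hL, hpartP, hLsum, mul_div_right_comm]
  simp only [zero_add]

theorem tangled_chain_count_recurrence_general (k n : ℕ) (hn : 1 ≤ n) :
    binPartSum k n = rfun k 0 n 0 / (2 * (n : ℚ) - 1) ^ k := by
  have hodd : oddPow k n ≠ 0 := pow_ne_zero k (by
    have : (1 : ℚ) ≤ n := by exact_mod_cast hn
    linarith)
  rw [rfun_eq_sum_levelWeight, Finset.sum_congr rfl fun M => levelWeight_zero_zero k hn,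
    ← Finset.sum_mul, ← oddPow, mul_div_cancel_right₀ _ hodd, binPartSum_eq_sum]

/-- **Corollary 12**: for `k ≥ 1` and `n ≥ 1`, the number of tangled chains of length
`k` and size `n`, i.e. `Σ_λ P_k(λ)/z_λ` over binary partitions `λ` of `n`, equals
`r^k(0, n, 0)/f^k(n)` with `f^k(s) = (2s-1)^k`. -/
theorem tangled_chain_count_recurrence (k n : ℕ) (hk : 1 ≤ k) (hn : 1 ≤ n) :
    binPartSum k n = rfun k 0 n 0 / (2 * (n : ℚ) - 1) ^ k :=
  tangled_chain_count_recurrence_general k n hn
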